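/- The max-min SINR power allocation problem with interference admits an equal-SINR optimal solution. Precisely: let N ≥ 1, and for each n define the SINR γ_n(p) = a_n p_n / (Σ_{i≠n} b_{n,i} p_i + σ²), where a_n > 0, b_{n,i} ≥ 0 for all i ≠ n, and σ² > 0. Then there exists p* in the power simplex Δ such that min_n γ_n(p*) = sup_{p ∈ Δ} min_n γ_n(p) and γ_1(p*) = γ_2(p*) = ⋯ = γ_N(p*). -/

import Mathlib

/-!
Let `t` be the optimal max-min SINR, attained by compactness of the simplex. Among the powers
`p ∈ Δ` achieving `γₙ(p) ≥ t` for every user, take one of least total power. If some user had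
`γₙ(p) > t`, lowering its power to `t Dₙ(p) / aₙ` would give it SINR exactly `t`, since its
interference-plus-noise `Dₙ(p)` does not involve `pₙ`, and would only reduce the interference
seen by the other users; this contradicts minimality, so all SINRs equal `t`.
-/

open Finset Function

theorem Real.iSup₂_eq_of_isMaxOn {α : Type*} {f : α → ℝ} {s : Set α} {x : α} (hx : x ∈ s)
    (hmax : IsMaxOn f s x) (h0 : 0 ≤ f x) : ⨆ y ∈ s, f y = f x := by
  -- for `y ∉ s` the inner supremum is `sSup ∅ = 0`
  have hle : ∀ y, ⨆ _ : y ∈ s, f y ≤ f x := fun y => Real.iSup_le (fun hy => hmax hy) h0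
  refine (Real.iSup_le hle h0).antisymm ?_
  calc f x = ⨆ _ : x ∈ s, f x := (ciSup_pos (f := fun _ => f x) hx).symm
    _ ≤ ⨆ y ∈ s, f y := le_ciSup ⟨f x, Set.forall_mem_range.2 hle⟩ x

noncomputable section

variable {ι : Type*} [Fintype ι]

def powerSimplex (ι : Type*) [Fintype ι] : Set (ι → ℝ) :=
  {p | (∀ n, 0 ≤ p n) ∧ ∑ n, p n ≤ 1}

theorem zero_mem_powerSimplex : (0 : ι → ℝ) ∈ powerSimplex ι :=
  ⟨fun _ => le_rfl, by simp⟩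

theorem isCompact_powerSimplex : IsCompact (powerSimplex ι) := by
  have hclosed : IsClosed (powerSimplex ι) := by
    rw [powerSimplex, Set.ofPred_and, Set.ofPred_forall]
    exact (isClosed_iInter fun n => isClosed_le continuous_const (continuous_apply n)).inter
      (isClosed_le (by fun_prop) continuous_const)
  refine (isCompact_univ_pi fun _ => isCompact_Icc (a := (0 : ℝ)) (b := 1)).of_isClosed_subset
    hclosed fun p hp n _ => ⟨hp.1 n, ?_⟩
  exact (single_le_sum (fun i _ => hp.1 i) (mem_univ n)).trans hp.2

variable [DecidableEq ι]

def interferencePlusNoise (b : ι → ι → ℝ) (σsq : ℝ) (p : ι → ℝ) (n : ι) : ℝ :=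
  ∑ i ∈ univ.erase n, b n i * p i + σsq

def sinr (a : ι → ℝ) (b : ι → ι → ℝ) (σsq : ℝ) (p : ι → ℝ) (n : ι) : ℝ :=
  a n * p n / interferencePlusNoise b σsq p n

variable {a : ι → ℝ} {b : ι → ι → ℝ} {σsq : ℝ}

theorem interferencePlusNoise_mono (hb : ∀ n i, i ≠ n → 0 ≤ b n i) {p q : ι → ℝ} (hpq : p ≤ q)
    (n : ι) : interferencePlusNoise b σsq p n ≤ interferencePlusNoise b σsq q n :=
  add_le_add_left (sum_le_sum fun i hi =>
    mul_le_mul_of_nonneg_left (hpq i) (hb n i (ne_of_mem_erase hi))) _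

theorem interferencePlusNoise_pos (hb : ∀ n i, i ≠ n → 0 ≤ b n i) (hσ : 0 < σsq) {p : ι → ℝ}
    (hp : 0 ≤ p) (n : ι) : 0 < interferencePlusNoise b σsq p n :=
  add_pos_of_nonneg_of_pos
    (sum_nonneg fun i hi => mul_nonneg (hb n i (ne_of_mem_erase hi)) (hp i)) hσ

theorem interferencePlusNoise_update_self (p : ι → ℝ) (n : ι) (x : ℝ) :
    interferencePlusNoise b σsq (update p n x) n = interferencePlusNoise b σsq p n := by
  unfold interferencePlusNoise
  congr 1
  exact sum_congr rfl fun i hi => by rw [update_of_ne (ne_of_mem_erase hi)]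

theorem continuous_interferencePlusNoise (n : ι) :
    Continuous fun p => interferencePlusNoise b σsq p n := by
  unfold interferencePlusNoise
  fun_prop

theorem sinr_nonneg (ha : ∀ n, 0 < a n) (hb : ∀ n i, i ≠ n → 0 ≤ b n i) (hσ : 0 < σsq)
    {p : ι → ℝ} (hp : 0 ≤ p) (n : ι) : 0 ≤ sinr a b σsq p n :=
  div_nonneg (mul_nonneg (ha n).le (hp n)) (interferencePlusNoise_pos hb hσ hp n).le

theorem sinr_le_sinr_of_le (ha : ∀ n, 0 < a n) (hb : ∀ n i, i ≠ n → 0 ≤ b n i) (hσ : 0 < σsq)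
    {p q : ι → ℝ} (hq : 0 ≤ q) (hqp : q ≤ p) {n : ι} (hn : q n = p n) :
    sinr a b σsq p n ≤ sinr a b σsq q n := by
  unfold sinr
  rw [hn]
  exact div_le_div_of_nonneg_left (mul_nonneg (ha n).le (hq.trans hqp n))
    (interferencePlusNoise_pos hb hσ hq n) (interferencePlusNoise_mono hb hqp n)

theorem continuousOn_sinr (hb : ∀ n i, i ≠ n → 0 ≤ b n i) (hσ : 0 < σsq) (n : ι) :
    ContinuousOn (fun p => sinr a b σsq p n) (Set.Ici 0) :=
  ((continuous_const.mul (continuous_apply n)).continuousOn).div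
    (continuous_interferencePlusNoise n).continuousOn
    fun _ hp => (interferencePlusNoise_pos hb hσ hp n).ne'

def minSinr (a : ι → ℝ) (b : ι → ι → ℝ) (σsq : ℝ) (p : ι → ℝ) : ℝ :=
  ⨅ n, sinr a b σsq p n

theorem le_minSinr_iff [Nonempty ι] {p : ι → ℝ} {t : ℝ} :
    t ≤ minSinr a b σsq p ↔ ∀ n, t ≤ sinr a b σsq p n :=
  le_ciInf_iff (Set.finite_range _).bddBelow

theorem continuousOn_minSinr [Nonempty ι] (hb : ∀ n i, i ≠ n → 0 ≤ b n i) (hσ : 0 < σsq) :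
    ContinuousOn (minSinr a b σsq) (Set.Ici 0) := by
  have := ContinuousOn.finset_inf'_apply univ_nonempty fun n _ =>
    continuousOn_sinr (a := a) hb hσ n
  simp only [inf'_univ_eq_ciInf] at this
  exact this

theorem exists_isMaxOn_minSinr [Nonempty ι] (hb : ∀ n i, i ≠ n → 0 ≤ b n i) (hσ : 0 < σsq) :
    ∃ p ∈ powerSimplex ι, IsMaxOn (minSinr a b σsq) (powerSimplex ι) p :=
  isCompact_powerSimplex.exists_isMaxOn ⟨0, zero_mem_powerSimplex⟩
    ((continuousOn_minSinr hb hσ).mono fun _ hp => hp.1)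

theorem exists_sum_lt_of_lt_sinr (ha : ∀ n, 0 < a n) (hb : ∀ n i, i ≠ n → 0 ≤ b n i)
    (hσ : 0 < σsq) {t : ℝ} (ht : 0 ≤ t) {p : ι → ℝ} (hp : p ∈ powerSimplex ι)
    (hpt : ∀ m, t ≤ sinr a b σsq p m) {n : ι} (hn : t < sinr a b σsq p n) :
    ∃ q ∈ powerSimplex ι, (∀ m, t ≤ sinr a b σsq q m) ∧ ∑ m, q m < ∑ m, p m := by
  set D := interferencePlusNoise b σsq p n
  have hD : 0 < D := interferencePlusNoise_pos hb hσ hp.1 n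
  set q := update p n (t * D / a n) with hq_def
  have hqn_nonneg : 0 ≤ t * D / a n := div_nonneg (mul_nonneg ht hD.le) (ha n).le
  have hqn_lt : t * D / a n < p n := by
    rw [div_lt_iff₀ (ha n)]
    rw [sinr, lt_div_iff₀ hD] at hn
    linarith
  have hq_nonneg : 0 ≤ q := le_update_iff.2 ⟨hqn_nonneg, fun i _ => hp.1 i⟩
  have hqp : q ≤ p := update_le_iff.2 ⟨hqn_lt.le, fun _ _ => le_rfl⟩
  have hsum : ∑ m, q m < ∑ m, p m :=
    sum_lt_sum (fun m _ => hqp m) ⟨n, mem_univ n, by simpa [q] using hqn_lt⟩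
  refine ⟨q, ⟨hq_nonneg, hsum.le.trans hp.2⟩, fun m => ?_, hsum⟩
  rcases eq_or_ne m n with rfl | hmn
  · refine ge_of_eq ?_
    rw [sinr, hq_def, interferencePlusNoise_update_self, update_self,
      mul_div_cancel₀ _ (ha m).ne', mul_div_cancel_right₀ _ hD.ne']
  · exact (hpt m).trans (sinr_le_sinr_of_le ha hb hσ hq_nonneg hqp (update_of_ne hmn _ _))

theorem exists_sinr_eq_of_le_sinr (ha : ∀ n, 0 < a n) (hb : ∀ n i, i ≠ n → 0 ≤ b n i)
    (hσ : 0 < σsq) {t : ℝ} (ht : 0 ≤ t) {p : ι → ℝ} (hp : p ∈ powerSimplex ι)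
    (hpt : ∀ m, t ≤ sinr a b σsq p m) :
    ∃ q ∈ powerSimplex ι, ∀ n, sinr a b σsq q n = t := by
  set S := {q ∈ powerSimplex ι | ∀ m, t ≤ sinr a b σsq q m}
  have hS : IsCompact S := by
    have hS_eq : S = powerSimplex ι ∩
        ⋂ m, powerSimplex ι ∩ (fun q => sinr a b σsq q m) ⁻¹' Set.Ici t := by
      ext q
      simp only [S, Set.mem_ofPred_eq, Set.mem_inter_iff, Set.mem_iInter, Set.mem_preimage,
        Set.mem_Ici]
      exact ⟨fun h => ⟨h.1, fun m => ⟨h.1, h.2 m⟩⟩, fun h => ⟨h.1, fun m => (h.2 m).2⟩⟩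
    refine isCompact_powerSimplex.of_isClosed_subset ?_ (hS_eq ▸ Set.inter_subset_left)
    rw [hS_eq]
    exact isCompact_powerSimplex.isClosed.inter (isClosed_iInter fun m =>
      ((continuousOn_sinr hb hσ m).mono fun _ hq => hq.1).preimage_isClosed_of_isClosed
        isCompact_powerSimplex.isClosed isClosed_Ici)
  obtain ⟨q, ⟨hqΔ, hqt⟩, hmin⟩ :=
    hS.exists_isMinOn ⟨p, hp, hpt⟩ 
      (continuous_finsetSum _ fun m _ => continuous_apply m).continuousOn
  refine ⟨q, hqΔ, fun n => (hqt n).antisymm' (not_lt.1 fun hn => ?_)⟩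
  obtain ⟨q', hq'Δ, hq't, hsum⟩ := exists_sum_lt_of_lt_sinr ha hb hσ ht hqΔ hqt hn
  exact (hmin ⟨hq'Δ, hq't⟩).not_gt hsum

end

/-- The max-min SINR power allocation problem with interference admits an
equal-SINR optimal solution. -/
theorem stmt_1 (N : ℕ) (hN : 1 ≤ N)
    (a : Fin N → ℝ) (b : Fin N → Fin N → ℝ) (σsq : ℝ)
    (ha : ∀ n, 0 < a n) (hb : ∀ n i, i ≠ n → 0 ≤ b n i) (hσ : 0 < σsq)
    (γ : (Fin N → ℝ) → Fin N → ℝ)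
    (hγ : ∀ p n, γ p n = a n * p n / ((∑ i ∈ Finset.univ.erase n, b n i * p i) + σsq))
    (Δ : Set (Fin N → ℝ))
    (hΔ : Δ = {p : Fin N → ℝ | (∀ n, 0 ≤ p n) ∧ ∑ n, p n ≤ 1}) :
    ∃ pstar ∈ Δ,
      ((⨅ n, γ pstar n) = ⨆ p ∈ Δ, ⨅ n, γ p n) ∧
      ∀ n m, γ pstar n = γ pstar m := by
  have : Nonempty (Fin N) := ⟨⟨0, hN⟩⟩
  obtain rfl : γ = sinr a b σsq := funext₂ hγ
  obtain rfl : Δ = powerSimplex (Fin N) := hΔ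
  obtain ⟨p, hpΔ, hmax⟩ := exists_isMaxOn_minSinr (a := a) hb hσ
  have ht : 0 ≤ minSinr a b σsq p := le_minSinr_iff.2 (sinr_nonneg ha hb hσ hpΔ.1)
  obtain ⟨q, hqΔ, hq⟩ := exists_sinr_eq_of_le_sinr ha hb hσ ht hpΔ (le_minSinr_iff.1 le_rfl)
  have hqmin : minSinr a b σsq q = minSinr a b σsq p := by simp only [minSinr, hq, ciInf_const]
  refine ⟨q, hqΔ, ?_, fun n m => (hq n).trans (hq m).symm⟩
  exact hqmin.trans (Real.iSup₂_eq_of_isMaxOn hpΔ hmax ht).symm
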